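/- Let s ∈ (0,1) be irrational. If Rⁿ(s) > 1/2 for every even integer n ≥ 0 and Rⁿ(s) ∈ (1/4, 1/2) for every odd integer n ≥ 1, then s = √2/2. -/

import Mathlib

/-- The renormalization map `R : (0,1) → [0,1)`: `R(x) = 1 − x` if `x ≥ 1/2`, and
`R(x) = 1/(2x) − ⌊1/(2x)⌋` if `x < 1/2`. -/
noncomputable def Rmap (x : ℝ) : ℝ :=
  if x < 1/2 then 1 / (2 * x) - ⌊1 / (2 * x)⌋ else 1 - x

/-- The Gauss map `γ(x) = 1/x − ⌊1/x⌋`. -/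
noncomputable def gaussMap (x : ℝ) : ℝ := 1 / x - ⌊1 / x⌋

/-!
On the even iterates the orbit alternates `x ↦ 1 - x ↦ 1/(2(1-x)) - 1`, and this composite
has `√2/2` as a repelling fixed point: it moves every point of `(1/2, 3/4)` at least twice as far
away from `√2/2`. An orbit confined to `(1/2, 3/4)` therefore cannot start anywhere but at `√2/2`.
-/

lemma eq_of_expanding_of_bounded {u : ℕ → ℝ} {p c C : ℝ} (hc : 1 < c)
    (hexp : ∀ n, c * |u n - p| ≤ |u (n + 1) - p|) (hbdd : ∀ n, |u n - p| ≤ C) : u 0 = p := by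
  have hgrow : ∀ n, c ^ n * |u 0 - p| ≤ |u n - p| := by
    intro n
    induction n with
    | zero => simp
    | succ n ih =>
      calc c ^ (n + 1) * |u 0 - p| = c * (c ^ n * |u 0 - p|) := by ring
        _ ≤ c * |u n - p| := by gcongr
        _ ≤ |u (n + 1) - p| := hexp n
  by_contra hne
  have hpos : 0 < |u 0 - p| := abs_pos.mpr (sub_ne_zero.mpr hne)
  obtain ⟨n, hn⟩ := pow_unbounded_of_one_lt (C / |u 0 - p|) hc
  rw [div_lt_iff₀ hpos] at hn
  linarith [hgrow n, hbdd n]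

lemma Rmap_of_half_le {x : ℝ} (hx : 1 / 2 ≤ x) : Rmap x = 1 - x := by
  rw [Rmap, if_neg (not_lt.mpr hx)]

lemma Rmap_of_mem_Ioo {x : ℝ} (hx : x ∈ Set.Ioo (1 / 4 : ℝ) (1 / 2)) :
    Rmap x = 1 / (2 * x) - 1 := by
  obtain ⟨hlo, hhi⟩ := hx
  have hfloor : ⌊1 / (2 * x)⌋ = 1 := by
    rw [Int.floor_eq_iff, le_div_iff₀ (by linarith), div_lt_iff₀ (by linarith)]
    norm_num
    constructor <;> linarith
  rw [Rmap, if_pos hhi, hfloor, Int.cast_one]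

lemma Rmap_iterate_two_of_mem_Ioo {x : ℝ} (hx : x ∈ Set.Ioo (1 / 2 : ℝ) (3 / 4)) :
    Rmap^[2] x = 1 / (2 * (1 - x)) - 1 := by
  obtain ⟨hlo, hhi⟩ := hx
  rw [Function.iterate_succ_apply', Function.iterate_one, Rmap_of_half_le hlo.le,
    Rmap_of_mem_Ioo ⟨by linarith, by linarith⟩]

lemma sqrt_two_div_two_sq : (Real.sqrt 2 / 2) ^ 2 = 1 / 2 := by
  rw [div_pow, Real.sq_sqrt zero_le_two]
  norm_num

lemma sqrt_two_div_two_mem_Ioo : Real.sqrt 2 / 2 ∈ Set.Ioo (1 / 2 : ℝ) (3 / 4) := by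
  have hsq := sqrt_two_div_two_sq
  have hnn : 0 ≤ Real.sqrt 2 / 2 := by positivity
  constructor <;> nlinarith

lemma two_mul_abs_sub_le_abs_Rmap_iterate_two_sub {x : ℝ}
    (hx : x ∈ Set.Ioo (1 / 2 : ℝ) (3 / 4)) :
    2 * |x - Real.sqrt 2 / 2| ≤ |Rmap^[2] x - Real.sqrt 2 / 2| := by
  obtain ⟨hα₁, hα₂⟩ := sqrt_two_div_two_mem_Ioo
  have hα_sq := sqrt_two_div_two_sq
  set α := Real.sqrt 2 / 2
  obtain ⟨hx₁, hx₂⟩ := hx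
  have hD : 0 < 2 * (1 - x) * (1 - α) := by nlinarith
  have hD' : 2 * (1 - x) * (1 - α) < 1 / 2 := by
    nlinarith [mul_lt_mul'' (show 1 - x < 1 / 2 by linarith) (show 1 - α < 1 / 2 by linarith)
      (by linarith) (by linarith)]
  -- `α` is a fixed point of `x ↦ 1/(2(1-x)) - 1` since `α² = 1/2`
  have hfix : (Rmap^[2] x - α) * (2 * (1 - x) * (1 - α)) = x - α := by
    have hx_ne : 1 - x ≠ 0 := by linarith
    rw [Rmap_iterate_two_of_mem_Ioo ⟨hx₁, hx₂⟩]
    field_simp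
    linear_combination 2 * (1 - x) * hα_sq
  have habs : |Rmap^[2] x - α| * (2 * (1 - x) * (1 - α)) = |x - α| := by
    rw [← abs_of_pos hD, ← abs_mul, hfix]
  nlinarith [abs_nonneg (Rmap^[2] x - α)]

theorem R_orbit_forces_sqrt_two_general (s : ℝ)
    (heven : ∀ n : ℕ, Even n → 1/2 < Rmap^[n] s)
    (hodd : ∀ n : ℕ, Odd n → Rmap^[n] s ∈ Set.Ioo (1/4 : ℝ) (1/2)) :
    s = Real.sqrt 2 / 2 := by
  have hmem : ∀ n, Rmap^[2 * n] s ∈ Set.Ioo (1 / 2 : ℝ) (3 / 4) := by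
    intro n
    have h₁ := heven (2 * n) (even_two_mul n)
    have h₂ := (hodd (2 * n + 1) (odd_two_mul_add_one n)).1
    rw [show Rmap^[2 * n + 1] s = Rmap (Rmap^[2 * n] s) from Function.iterate_succ_apply' ..,
      Rmap_of_half_le h₁.le] at h₂
    exact ⟨h₁, by linarith⟩
  have hexp : ∀ n, 2 * |Rmap^[2 * n] s - Real.sqrt 2 / 2|
      ≤ |Rmap^[2 * (n + 1)] s - Real.sqrt 2 / 2| := by
    intro n
    rw [mul_add, mul_one, add_comm, Function.iterate_add_apply]
    exact two_mul_abs_sub_le_abs_Rmap_iterate_two_sub (hmem n)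
  have hbdd : ∀ n, |Rmap^[2 * n] s - Real.sqrt 2 / 2| ≤ 1 := by
    intro n
    obtain ⟨hx₁, hx₂⟩ := hmem n
    obtain ⟨hα₁, hα₂⟩ := sqrt_two_div_two_mem_Ioo
    rw [abs_le]
    constructor <;> linarith
  exact eq_of_expanding_of_bounded one_lt_two hexp hbdd

/-- Let `s ∈ (0,1)` be irrational.  If `Rⁿ(s) > 1/2` for every even
`n ≥ 0` and `Rⁿ(s) ∈ (1/4, 1/2)` for every odd `n ≥ 1`, then `s = √2/2`. -/
theorem R_orbit_forces_sqrt_two (s : ℝ) (hs : s ∈ Set.Ioo (0 : ℝ) 1) (hirr : Irrational s)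
    (heven : ∀ n : ℕ, Even n → 1/2 < Rmap^[n] s)
    (hodd : ∀ n : ℕ, Odd n → Rmap^[n] s ∈ Set.Ioo (1/4 : ℝ) (1/2)) :
    s = Real.sqrt 2 / 2 :=
  R_orbit_forces_sqrt_two_general s heven hodd
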